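/- Let d ≥ 1 and let a, b ∈ (ℕ∪{0})^d be multi-indices. Define the tensor Θ_{a,b}(j,k,ℓ) := (2πik)^a (2πiℓ)^b if j = k + ℓ and Θ_{a,b}(j,k,ℓ) := 0 otherwise, where (2πik)^a = Π_{m=1}^d (2πi k_m)^{a_m}. Then Θ_{a,b} ∈ BT^{|a|+|b|+2N, N}(ℤ^d) for every N ∈ ℕ. (Θ_{a,b} is the tensor on the Fourier side of the bilinear partial differential operator T_{a,b}(F,G) = (∂^a F)(∂^b G) on the torus 𝕋^d.) -/

import Mathlib

open scoped ENNReal NNReal BigOperators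

noncomputable section

/-- The integer lattice `ℤ^d`. -/
abbrev Zd (d : ℕ) := Fin d → ℤ

/-- Euclidean norm `|j|` of an integer vector `j ∈ ℤ^d`. -/
def znorm {d : ℕ} (j : Zd d) : ℝ := Real.sqrt (∑ i, ((j i : ℝ)) ^ 2)

/-- Euclidean norm of a real vector. -/
def rnorm {d : ℕ} (x : Fin d → ℝ) : ℝ := Real.sqrt (∑ i, (x i) ^ 2)

/-- Japanese bracket `⟨x⟩ = (1 + x²)^{1/2}`. -/
def jb (x : ℝ) : ℝ := Real.sqrt (1 + x ^ 2)

/-- The discrete bilinear operator `𝒯_Θ` (named `Tbil` here) associated with an infinite tensor `Θ`: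
`(𝒯_Θ(f,g))_j = Σ_k Σ_ℓ Θ(j,k,ℓ) f_k g_ℓ`. -/
def Tbil {d : ℕ} (Θ : Zd d → Zd d → Zd d → ℂ) (f g : Zd d → ℂ) : Zd d → ℂ :=
  fun j => ∑' k, ∑' l, Θ j k l * f k * g l

/-- `ℓ^p`-type norm (extended-real valued) of a family of nonnegative extended reals,
with the usual modification (supremum) when `p = ∞`. -/
def nestNorm {ι : Type*} (p : ℝ≥0∞) (F : ι → ℝ≥0∞) : ℝ≥0∞ :=
  if p = ∞ then ⨆ i, F i else (∑' i, F i ^ p.toReal) ^ (1 / p.toReal)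

/-- The weighted `ℓ^p_s(ℤ^d)` norm `(Σ_k ⟨k⟩^{sp} |f_k|^p)^{1/p}`. -/
def wlpNorm {d : ℕ} (p : ℝ≥0∞) (s : ℝ) (f : Zd d → ℂ) : ℝ≥0∞ :=
  nestNorm p fun k => ENNReal.ofReal (jb (znorm k) ^ s * ‖f k‖)

/-- The `ℓ^p(ℤ^d)` norm. -/
def lpNorm {d : ℕ} (p : ℝ≥0∞) (f : Zd d → ℂ) : ℝ≥0∞ :=
  nestNorm p fun k => ENNReal.ofReal ‖f k‖

/-- The tensor norm `‖Θ‖_{ω,N} = sup_{j,k,ℓ} |Θ(j,k,ℓ)| ⟨|j−k|+|j−ℓ|⟩^{2N} /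
(⟨|j|+|k|⟩^ω ⟨|j|+|ℓ|⟩^ω)`. -/
def tensorNorm {d : ℕ} (ω N : ℝ) (Θ : Zd d → Zd d → Zd d → ℂ) : ℝ≥0∞ :=
  ⨆ j, ⨆ k, ⨆ l, ENNReal.ofReal
    (‖Θ j k l‖ * jb (znorm (j - k) + znorm (j - l)) ^ (2 * N) /
      (jb (znorm j + znorm k) ^ ω * jb (znorm j + znorm l) ^ ω))

/-- The tensor norm `‖Θ‖_{ω₁,ω₂,N}`. -/
def tensorNorm2 {d : ℕ} (ω₁ ω₂ N : ℝ) (Θ : Zd d → Zd d → Zd d → ℂ) : ℝ≥0∞ :=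
  ⨆ j, ⨆ k, ⨆ l, ENNReal.ofReal
    (‖Θ j k l‖ * jb (znorm (j - k) + znorm (j - l)) ^ (2 * N) /
      (jb (znorm j + znorm k) ^ ω₁ * jb (znorm j + znorm l) ^ ω₂))

/-- The tensor norm `‖Θ‖_{0,0,ω,N} = sup_{j,k,ℓ} |Θ(j,k,ℓ)| ⟨|j−k|+|j−ℓ|⟩^{2N} /
⟨|j|+|k|+|ℓ|⟩^ω`. -/
def tensorNorm00 {d : ℕ} (ω N : ℝ) (Θ : Zd d → Zd d → Zd d → ℂ) : ℝ≥0∞ :=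
  ⨆ j, ⨆ k, ⨆ l, ENNReal.ofReal
    (‖Θ j k l‖ * jb (znorm (j - k) + znorm (j - l)) ^ (2 * N) /
      jb (znorm j + znorm k + znorm l) ^ ω)

/-- The first bilinear commutator `[𝒯_Θ, b]₁(f,g) = 𝒯_Θ(bf, g) − b·𝒯_Θ(f,g)`. -/
def comm1 {d : ℕ} (Θ : Zd d → Zd d → Zd d → ℂ) (b f g : Zd d → ℂ) : Zd d → ℂ :=
  fun j => Tbil Θ (fun k => b k * f k) g j - b j * Tbil Θ f g j

/-- The second bilinear commutator `[𝒯_Θ, b]₂(f,g) = 𝒯_Θ(f, bg) − b·𝒯_Θ(f,g)`. -/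
def comm2 {d : ℕ} (Θ : Zd d → Zd d → Zd d → ℂ) (b f g : Zd d → ℂ) : Zd d → ℂ :=
  fun j => Tbil Θ f (fun l => b l * g l) j - b j * Tbil Θ f g j

/-- One-step finite difference in the variables `(j,k)`, with shift `v ∈ ℤ^d`:
`(D2 v Θ)(j,k,ℓ) = Θ(j+v, k+v, ℓ) − Θ(j,k,ℓ)`. -/
def D2 {d : ℕ} (v : Zd d) (Θ : Zd d → Zd d → Zd d → ℂ) : Zd d → Zd d → Zd d → ℂ :=
  fun j k l => Θ (j + v) (k + v) l - Θ j k l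

/-- One-step finite difference in the variables `(j,ℓ)`, with shift `v ∈ ℤ^d`:
`(D3 v Θ)(j,k,ℓ) = Θ(j+v, k, ℓ+v) − Θ(j,k,ℓ)`. -/
def D3 {d : ℕ} (v : Zd d) (Θ : Zd d → Zd d → Zd d → ℂ) : Zd d → Zd d → Zd d → ℂ :=
  fun j k l => Θ (j + v) k (l + v) - Θ j k l

/-- The iterated partial finite difference operator `Δ₂^α` for `α ∈ ℤ^d`:
in direction `m`, `Δ_{2,m}^t = (Δ₂^{m, sign t})^{|t|}`. -/
def Delta2 {d : ℕ} (α : Zd d) (Θ : Zd d → Zd d → Zd d → ℂ) : Zd d → Zd d → Zd d → ℂ :=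
  (List.finRange d).foldr
    (fun m F => (D2 (Pi.single m (Int.sign (α m))))^[(α m).natAbs] ∘ F) id Θ

/-- The iterated partial finite difference operator `Δ₃^β` for `β ∈ ℤ^d`. -/
def Delta3 {d : ℕ} (β : Zd d) (Θ : Zd d → Zd d → Zd d → ℂ) : Zd d → Zd d → Zd d → ℂ :=
  (List.finRange d).foldr
    (fun m F => (D3 (Pi.single m (Int.sign (β m))))^[(β m).natAbs] ∘ F) id Θ

/-- `|α| = Σ_m |α_m|` for `α ∈ ℤ^d`. -/
def l1norm {d : ℕ} (α : Zd d) : ℝ := ∑ m, |(α m : ℝ)|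

/-- The bilinear tensor class `BT^{ω,N}(ℤ^d)`:
`|Δ₂^α Δ₃^β Θ(j,k,ℓ)| ≤ C_{N,α,β} ⟨|j|+|k|+|ℓ|⟩^{ω−|α|−|β|} ⟨|j−k|+|j−ℓ|⟩^{−2N}`. -/
def BT {d : ℕ} (ω : ℝ) (N : ℕ) (Θ : Zd d → Zd d → Zd d → ℂ) : Prop :=
  ∀ α β : Zd d, ∃ C : ℝ, 0 < C ∧ ∀ j k l : Zd d,
    ‖Delta2 α (Delta3 β Θ) j k l‖ ≤
      C * jb (znorm j + znorm k + znorm l) ^ (ω - l1norm α - l1norm β) *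
        jb (znorm (j - k) + znorm (j - l)) ^ (-(2 * (N : ℝ)))

/-- The bilinear tensor class of order zero, `BT^0(ℤ^d) = ∪_{N > d} BT^{0,N}(ℤ^d)`. -/
def BT0 {d : ℕ} (Θ : Zd d → Zd d → Zd d → ℂ) : Prop :=
  ∃ N : ℕ, d < N ∧ BT 0 N Θ

/-- Directional derivative of a function on `ℝ^d × ℝ^d` in the direction `v`. -/
def pDeriv {d : ℕ} (v : (Fin d → ℝ) × (Fin d → ℝ))
    (F : (Fin d → ℝ) × (Fin d → ℝ) → ℂ) : (Fin d → ℝ) × (Fin d → ℝ) → ℂ :=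
  fun p => fderiv ℝ F p v

/-- Iterated partial derivative `∂_x^α` in the first group of variables. -/
def pdx {d : ℕ} (α : Fin d → ℕ) :
    ((Fin d → ℝ) × (Fin d → ℝ) → ℂ) → (Fin d → ℝ) × (Fin d → ℝ) → ℂ :=
  (List.finRange d).foldr (fun m G => (pDeriv (Pi.single m 1, 0))^[α m] ∘ G) id

/-- Iterated partial derivative `∂_y^β` in the second group of variables. -/
def pdy {d : ℕ} (β : Fin d → ℕ) :
    ((Fin d → ℝ) × (Fin d → ℝ) → ℂ) → (Fin d → ℝ) × (Fin d → ℝ) → ℂ :=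
  (List.finRange d).foldr (fun m G => (pDeriv (0, Pi.single m 1))^[β m] ∘ G) id

/-!
On its support `j = k + ℓ` the tensor is `u(k) w(ℓ)`, where `u` and `w` are products of
one-variable monomials in the coordinates. The difference `D2` (resp. `D3`) acts as a forward
difference on `u` (resp. `w`), and along `e_m` it only touches the `m`-th factor. A `t`-fold
forward difference of a polynomial of degree `n` is a polynomial of degree at most `n - t`, and
vanishes when `t > n`; either way it is bounded by `C ⟨J⟩^(n - t)` on `|x| ≤ J`. Finally, on the
support `|j - k| + |j - ℓ| = |ℓ| + |k| ≤ |j| + |k| + |ℓ|`, so the decay factor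
`⟨|j - k| + |j - ℓ|⟩^(-2N)` is paid for by `⟨|j| + |k| + |ℓ|⟩^(2N)`.
-/

open Polynomial fwdDiff

theorem one_le_jb (x : ℝ) : 1 ≤ jb x :=
  Real.one_le_sqrt.mpr (le_add_of_nonneg_right (sq_nonneg x))

theorem jb_pos (x : ℝ) : 0 < jb x := one_pos.trans_le (one_le_jb x)

theorem abs_le_jb (x : ℝ) : |x| ≤ jb x :=
  Real.abs_le_sqrt (le_add_of_nonneg_left zero_le_one)

theorem jb_le_jb {x y : ℝ} (hx : 0 ≤ x) (hxy : x ≤ y) : jb x ≤ jb y :=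
  Real.sqrt_le_sqrt (by gcongr)

theorem znorm_nonneg {d : ℕ} (k : Zd d) : 0 ≤ znorm k := Real.sqrt_nonneg _

theorem abs_apply_le_znorm {d : ℕ} (k : Zd d) (m : Fin d) : |(k m : ℝ)| ≤ znorm k :=
  Real.abs_le_sqrt (Finset.single_le_sum (f := fun i => ((k i : ℝ)) ^ 2)
    (fun _ _ => sq_nonneg _) (Finset.mem_univ m))

theorem l1norm_eq_sum_natAbs {d : ℕ} (α : Zd d) : l1norm α = ∑ m, ((α m).natAbs : ℝ) := by
  simp only [l1norm, Nat.cast_natAbs, Int.cast_abs]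

namespace Polynomial

variable {R : Type*} [CommRing R]

theorem natDegree_taylor_sub_lt {p : R[X]} {r : R} (h : taylor r p - p ≠ 0) :
    (taylor r p - p).natDegree < p.natDegree := by
  rcases eq_or_ne p.natDegree 0 with hdeg | hdeg
  · obtain ⟨c, rfl⟩ := natDegree_eq_zero.mp hdeg
    simp at h
  · have hp : p ≠ 0 := by rintro rfl; simp at hdeg
    refine natDegree_lt_natDegree h ?_
    exact (degree_sub_lt_left (degree_taylor p r) ((taylor_eq_zero r p).not.mpr hp)
      (leadingCoeff_taylor r p)).trans_eq (degree_taylor p r)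

theorem iterate_taylor_sub_eq_zero_or_natDegree_add_le (p : R[X]) (r : R) (t : ℕ) :
    (fun q => taylor r q - q)^[t] p = 0 ∨
      ((fun q => taylor r q - q)^[t] p).natDegree + t ≤ p.natDegree := by
  induction t with
  | zero => simp
  | succ t ih =>
    rw [Function.iterate_succ_apply']
    set q := (fun q => taylor r q - q)^[t] p
    by_cases hq : taylor r q - q = 0
    · exact .inl hq
    · have hq0 : q ≠ 0 := by rintro h; simp [h] at hq
      have hlt := natDegree_taylor_sub_lt hq
      have hle := ih.resolve_left hq0
      exact .inr (by omega)

theorem fwdDiff_eval_intCast (p : R[X]) (s : ℤ) :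
    Δ_[s] (fun x : ℤ => p.eval (x : R)) = fun x : ℤ => (taylor (s : R) p - p).eval (x : R) := by
  funext x
  simp [fwdDiff, taylor_eval]

theorem iterate_fwdDiff_eval_intCast (p : R[X]) (s : ℤ) (t : ℕ) :
    (Δ_[s])^[t] (fun x : ℤ => p.eval (x : R)) =
      fun x : ℤ => ((fun q => taylor (s : R) q - q)^[t] p).eval (x : R) := by
  induction t with
  | zero => rfl
  | succ t ih => rw [Function.iterate_succ_apply', ih, fwdDiff_eval_intCast,
      Function.iterate_succ_apply']

theorem norm_eval_le_of_norm_le {𝕜 : Type*} [NormedField 𝕜] (q : 𝕜[X]) {x : 𝕜}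
    {J : ℝ} (hx : ‖x‖ ≤ J) :
    ‖q.eval x‖ ≤ (∑ i ∈ Finset.range (q.natDegree + 1), ‖q.coeff i‖) * jb J ^ q.natDegree := by
  rw [eval_eq_sum_range, Finset.sum_mul]
  refine (norm_sum_le _ _).trans (Finset.sum_le_sum fun i hi => ?_)
  rw [norm_mul, norm_pow]
  gcongr
  calc ‖x‖ ^ i ≤ jb J ^ i := by gcongr; exact hx.trans ((le_abs_self J).trans (abs_le_jb J))
    _ ≤ jb J ^ q.natDegree :=
      pow_le_pow_right₀ (one_le_jb J) (Nat.lt_succ_iff.mp (Finset.mem_range.mp hi))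

end Polynomial

theorem norm_iterate_fwdDiff_eval_intCast_le (p : ℂ[X]) {n : ℕ} (hp : p.natDegree ≤ n)
    (s : ℤ) (t : ℕ) :
    ∃ C > 0, ∀ (x : ℤ) (J : ℝ), |(x : ℝ)| ≤ J →
      ‖(Δ_[s])^[t] (fun y : ℤ => p.eval (y : ℂ)) x‖ ≤ C * jb J ^ ((n : ℝ) - t) := by
  rw [iterate_fwdDiff_eval_intCast]
  set q := (fun q => taylor (s : ℂ) q - q)^[t] p
  rcases iterate_taylor_sub_eq_zero_or_natDegree_add_le p (s : ℂ) t with hq | hq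
  · exact ⟨1, one_pos, fun x J _ => by
      simp only [q, hq, eval_zero, norm_zero]
      exact mul_nonneg zero_le_one (Real.rpow_nonneg (jb_pos J).le _)⟩
  refine ⟨(∑ i ∈ Finset.range (q.natDegree + 1), ‖q.coeff i‖) + 1, by positivity,
    fun x J hxJ => ?_⟩
  have hexp : (q.natDegree : ℝ) ≤ n - t := by
    rw [le_sub_iff_add_le]; exact_mod_cast hq.trans hp
  calc ‖q.eval (x : ℂ)‖
      ≤ (∑ i ∈ Finset.range (q.natDegree + 1), ‖q.coeff i‖) * jb J ^ q.natDegree :=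
        q.norm_eval_le_of_norm_le (by rwa [Complex.norm_intCast])
    _ ≤ ((∑ i ∈ Finset.range (q.natDegree + 1), ‖q.coeff i‖) + 1) * jb J ^ ((n : ℝ) - t) := by
        rw [← Real.rpow_natCast]
        exact mul_le_mul (le_add_of_nonneg_right zero_le_one)
          (Real.rpow_le_rpow_of_exponent_le (one_le_jb J) hexp)
          (Real.rpow_nonneg (jb_pos J).le _) (by positivity)

section Tensors

variable {d : ℕ}

def productTensor (u w : Zd d → ℂ) : Zd d → Zd d → Zd d → ℂ :=
  fun j k l => if j = k + l then u k * w l else 0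

def multiFwdDiff (α : Zd d) (u : Zd d → ℂ) : Zd d → ℂ :=
  (List.finRange d).foldr (fun m F => (Δ_[Pi.single m (α m).sign])^[(α m).natAbs] ∘ F) id u

theorem D2_productTensor (v : Zd d) (u w : Zd d → ℂ) :
    D2 v (productTensor u w) = productTensor (Δ_[v] u) w := by
  funext j k l
  simp only [D2, productTensor, fwdDiff, add_right_comm k v l, add_left_inj]
  split_ifs <;> ring

theorem D3_productTensor (v : Zd d) (u w : Zd d → ℂ) :
    D3 v (productTensor u w) = productTensor u (Δ_[v] w) := by
  funext j k l
  simp only [D3, productTensor, fwdDiff, ← add_assoc, add_left_inj]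
  split_ifs <;> ring

theorem Delta2_productTensor (α : Zd d) (u w : Zd d → ℂ) :
    Delta2 α (productTensor u w) = productTensor (multiFwdDiff α u) w := by
  have hiter (v : Zd d) (n : ℕ) (u : Zd d → ℂ) :
      (D2 v)^[n] (productTensor u w) = productTensor ((Δ_[v])^[n] u) w := by
    induction n generalizing u with
    | zero => rfl
    | succ n ih => rw [Function.iterate_succ_apply, Function.iterate_succ_apply,
        D2_productTensor, ih]
  rw [Delta2, multiFwdDiff]
  induction List.finRange d generalizing u with
  | nil => rfl
  | cons m L ih => simp only [List.foldr_cons, Function.comp_apply, ih, hiter]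

theorem Delta3_productTensor (β : Zd d) (u w : Zd d → ℂ) :
    Delta3 β (productTensor u w) = productTensor u (multiFwdDiff β w) := by
  have hiter (v : Zd d) (n : ℕ) (w : Zd d → ℂ) :
      (D3 v)^[n] (productTensor u w) = productTensor u ((Δ_[v])^[n] w) := by
    induction n generalizing w with
    | zero => rfl
    | succ n ih => rw [Function.iterate_succ_apply, Function.iterate_succ_apply,
        D3_productTensor, ih]
  rw [Delta3, multiFwdDiff]
  induction List.finRange d generalizing w with
  | nil => rfl
  | cons m L ih => simp only [List.foldr_cons, Function.comp_apply, ih, hiter]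

end Tensors

section CoordProd

variable {d : ℕ}

def coordProd (h : Fin d → ℤ → ℂ) : Zd d → ℂ := fun k => ∏ m, h m (k m)

theorem fwdDiff_single_coordProd (m : Fin d) (s : ℤ) (h : Fin d → ℤ → ℂ) :
    Δ_[Pi.single m s] (coordProd h) = coordProd (Function.update h m (Δ_[s] (h m))) := by
  funext k
  have hsplit (g : Fin d → ℂ) : ∏ m', g m' = g m * ∏ m' ∈ Finset.univ.erase m, g m' :=
    (Finset.mul_prod_erase _ _ (Finset.mem_univ m)).symm
  have hshift : ∏ m' ∈ Finset.univ.erase m, h m' ((k + Pi.single m s : Zd d) m') =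
      ∏ m' ∈ Finset.univ.erase m, h m' (k m') :=
    Finset.prod_congr rfl fun m' hm' => by simp [Finset.ne_of_mem_erase hm']
  have hupdate : ∏ m' ∈ Finset.univ.erase m, Function.update h m (Δ_[s] (h m)) m' (k m') =
      ∏ m' ∈ Finset.univ.erase m, h m' (k m') :=
    Finset.prod_congr rfl fun m' hm' => by simp [Finset.ne_of_mem_erase hm']
  simp only [fwdDiff, coordProd]
  rw [hsplit, hsplit (fun m' => h m' (k m')), hsplit, hshift, hupdate]
  simp only [Pi.add_apply, Pi.single_eq_same, Function.update_self, fwdDiff]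
  ring

theorem iterate_fwdDiff_single_coordProd (m : Fin d) (s : ℤ) (n : ℕ) (h : Fin d → ℤ → ℂ) :
    (Δ_[Pi.single m s])^[n] (coordProd h) =
      coordProd (Function.update h m ((Δ_[s])^[n] (h m))) := by
  induction n generalizing h with
  | zero => simp
  | succ n ih =>
    rw [Function.iterate_succ_apply, fwdDiff_single_coordProd, ih, Function.update_self,
      Function.update_idem, ← Function.iterate_succ_apply]

theorem multiFwdDiff_coordProd (α : Zd d) (h : Fin d → ℤ → ℂ) :
    multiFwdDiff α (coordProd h) =
      coordProd fun m => (Δ_[(α m).sign])^[(α m).natAbs] (h m) := by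
  suffices ∀ L : List (Fin d), L.Nodup → ∀ h : Fin d → ℤ → ℂ,
      L.foldr (fun m F => (Δ_[Pi.single m (α m).sign])^[(α m).natAbs] ∘ F) id (coordProd h) =
        coordProd fun m => if m ∈ L then (Δ_[(α m).sign])^[(α m).natAbs] (h m) else h m by
    simpa [multiFwdDiff] using this _ (List.nodup_finRange d) h
  intro L hL
  induction L with
  | nil => simp
  | cons m L ih =>
    intro h
    obtain ⟨hm, hL⟩ := List.nodup_cons.mp hL
    simp only [List.foldr_cons, Function.comp_apply, ih hL, iterate_fwdDiff_single_coordProd]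
    congr 1
    funext m'
    by_cases h1 : m' = m
    · subst h1; simp [hm]
    · simp [h1]

theorem norm_coordProd_le {h : Fin d → ℤ → ℂ} {C e : Fin d → ℝ}
    (hh : ∀ m (x : ℤ) (J : ℝ), |(x : ℝ)| ≤ J → ‖h m x‖ ≤ C m * jb J ^ e m)
    {k : Zd d} {J : ℝ} (hk : znorm k ≤ J) :
    ‖coordProd h k‖ ≤ (∏ m, C m) * jb J ^ (∑ m, e m) := by
  rw [coordProd, norm_prod, Real.rpow_sum_of_pos (jb_pos J), ← Finset.prod_mul_distrib]
  exact Finset.prod_le_prod (fun _ _ => norm_nonneg _)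
    fun m _ => hh m (k m) J ((abs_apply_le_znorm k m).trans hk)

end CoordProd

theorem norm_productTensor_le {d : ℕ} {u w : Zd d → ℂ} {C₁ C₂ e₁ e₂ : ℝ} (hC₁ : 0 ≤ C₁)
    (hC₂ : 0 ≤ C₂) (hu : ∀ k J, znorm k ≤ J → ‖u k‖ ≤ C₁ * jb J ^ e₁)
    (hw : ∀ l J, znorm l ≤ J → ‖w l‖ ≤ C₂ * jb J ^ e₂) {N : ℝ} (hN : 0 ≤ N) (j k l : Zd d) :
    ‖productTensor u w j k l‖ ≤ C₁ * C₂ * jb (znorm j + znorm k + znorm l) ^ (e₁ + e₂ + N) *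
      jb (znorm (j - k) + znorm (j - l)) ^ (-N) := by
  have hJpos := jb_pos (znorm j + znorm k + znorm l)
  have hKpos := jb_pos (znorm (j - k) + znorm (j - l))
  by_cases hjkl : j = k + l
  swap
  · rw [productTensor, if_neg hjkl, norm_zero]
    exact mul_nonneg (mul_nonneg (mul_nonneg hC₁ hC₂) (Real.rpow_nonneg hJpos.le _))
      (Real.rpow_nonneg hKpos.le _)
  set J := znorm j + znorm k + znorm l
  set K := znorm (j - k) + znorm (j - l)
  have hkJ : znorm k ≤ J := by linarith [znorm_nonneg j, znorm_nonneg l]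
  have hlJ : znorm l ≤ J := by linarith [znorm_nonneg j, znorm_nonneg k]
  have hKJ : K ≤ J := by
    simp only [K, hjkl, add_sub_cancel_left, add_sub_cancel_right]
    linarith [znorm_nonneg j]
  have hratio : 1 ≤ jb J ^ N * jb K ^ (-N) := by
    rw [Real.rpow_neg hKpos.le, ← div_eq_mul_inv, one_le_div (Real.rpow_pos_of_pos hKpos N)]
    exact Real.rpow_le_rpow hKpos.le
      (jb_le_jb (add_nonneg (znorm_nonneg _) (znorm_nonneg _)) hKJ) hN
  rw [productTensor, if_pos hjkl, norm_mul]
  calc ‖u k‖ * ‖w l‖ ≤ (C₁ * jb J ^ e₁) * (C₂ * jb J ^ e₂) :=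
        mul_le_mul (hu k J hkJ) (hw l J hlJ) (norm_nonneg _) (by positivity)
    _ = C₁ * C₂ * jb J ^ (e₁ + e₂) := by rw [Real.rpow_add hJpos e₁ e₂]; ring
    _ ≤ C₁ * C₂ * jb J ^ (e₁ + e₂) * (jb J ^ N * jb K ^ (-N)) :=
        le_mul_of_one_le_right (by positivity) hratio
    _ = C₁ * C₂ * jb J ^ (e₁ + e₂ + N) * jb K ^ (-N) := by
        rw [Real.rpow_add hJpos (e₁ + e₂) N]; ring

theorem norm_iterate_fwdDiff_monomial_le (c : ℂ) (n : ℕ) (s : ℤ) (t : ℕ) :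
    ∃ C > 0, ∀ (x : ℤ) (J : ℝ), |(x : ℝ)| ≤ J →
      ‖(Δ_[s])^[t] (fun y : ℤ => (c * y) ^ n) x‖ ≤ C * jb J ^ ((n : ℝ) - t) := by
  have hdeg : ((C c * X) ^ n).natDegree ≤ n :=
    (natDegree_pow_le_of_le n ((natDegree_C_mul_le c X).trans natDegree_X_le)).trans_eq
      (mul_one n)
  simpa using norm_iterate_fwdDiff_eval_intCast_le _ hdeg s t

theorem stmt_17_general {d : ℕ} (a b : Fin d → ℕ) :
    ∀ N : ℕ, BT ((∑ m, (a m : ℝ)) + (∑ m, (b m : ℝ)) + 2 * N) N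
      (fun j k l : Zd d =>
        if j = k + l then
          (∏ m, (2 * (Real.pi : ℂ) * Complex.I * (k m : ℂ)) ^ (a m)) *
          (∏ m, (2 * (Real.pi : ℂ) * Complex.I * (l m : ℂ)) ^ (b m))
        else 0) := by
  intro N α β
  set c : ℂ := 2 * Real.pi * Complex.I
  choose C₁ hC₁ hu using fun m =>
    norm_iterate_fwdDiff_monomial_le c (a m) (α m).sign (α m).natAbs
  choose C₂ hC₂ hw using fun m =>
    norm_iterate_fwdDiff_monomial_le c (b m) (β m).sign (β m).natAbs
  have hprod₁ : 0 < ∏ m, C₁ m := Finset.prod_pos fun m _ => hC₁ m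
  have hprod₂ : 0 < ∏ m, C₂ m := Finset.prod_pos fun m _ => hC₂ m
  refine ⟨_, mul_pos hprod₁ hprod₂, fun j k l => ?_⟩
  show ‖Delta2 α (Delta3 β (productTensor (coordProd fun m x => (c * x) ^ a m)
    (coordProd fun m x => (c * x) ^ b m))) j k l‖ ≤ _
  rw [Delta3_productTensor, Delta2_productTensor, multiFwdDiff_coordProd, multiFwdDiff_coordProd]
  convert norm_productTensor_le hprod₁.le hprod₂.le (fun _ _ hk => norm_coordProd_le hu hk)
    (fun _ _ hl => norm_coordProd_le hw hl) (N := 2 * N) (by positivity) j k l using 3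
  rw [l1norm_eq_sum_natAbs, l1norm_eq_sum_natAbs, Finset.sum_sub_distrib, Finset.sum_sub_distrib]
  congr 1
  ring

/-- the tensor `Θ_{a,b}(j,k,ℓ) = (2πik)^a (2πiℓ)^b 1_{j=k+ℓ}` of the bilinear
partial differential operator `T_{a,b}(F,G) = (∂^a F)(∂^b G)` belongs to
`BT^{|a|+|b|+2N, N}(ℤ^d)` for every `N ∈ ℕ`. -/
theorem stmt_17 {d : ℕ} (hd : 1 ≤ d) (a b : Fin d → ℕ) :
    ∀ N : ℕ, BT ((∑ m, (a m : ℝ)) + (∑ m, (b m : ℝ)) + 2 * N) N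
      (fun j k l : Zd d =>
        if j = k + l then
          (∏ m, (2 * (Real.pi : ℂ) * Complex.I * (k m : ℂ)) ^ (a m)) *
          (∏ m, (2 * (Real.pi : ℂ) * Complex.I * (l m : ℂ)) ^ (b m))
        else 0) :=
  stmt_17_general a b

end
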